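/- Fix b ∈ [p,q]. Then there exists c_0 ∈ ℝ such that for every c ≥ c_0 the function B(λ) = c − ∫_0^1 A'(t(λ−b)+b) dt (which equals c − (A(λ)−A(b))/(λ−b) for λ ∈ [p,q], λ ≠ b) satisfies B(λ) > 0 for all λ ∈ [p,q] and (−1)^{k−1} B^{(k)}(λ) > 0 for all λ ∈ [p,q] and 1 ≤ k ≤ N−1. (Thus subtracting a divided difference of A from a large constant produces a function satisfying the monotonicity condition with N replaced by N−1.) -/

import Mathlib

/-!
The divided difference is the segment average `G₀(x) = ∫₀¹ A'(t(x−b)+b) dt`. Differentiating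
under the integral sign gives `G_k' = G_{k+1}` for `G_k(x) = ∫₀¹ tᵏ A^{(k+1)}(t(x−b)+b) dt`, so
`B = c − G₀` has `(−1)^{k−1} B^{(k)} = (−1)ᵏ G_k`, an integral of the positive function
`tᵏ (−1)ᵏ A^{(k+1)}(t(x−b)+b)`. Positivity of `B` itself only needs `c` to exceed the maximum of
`G₀` on `[p,q]`.
-/

open Set Filter Topology MeasureTheory Metric intervalIntegral

section IteratedDeriv

variable {𝕜 F : Type*} [NontriviallyNormedField 𝕜] [NormedAddCommGroup F] [NormedSpace 𝕜 F]
  {f : 𝕜 → F} {s : Set 𝕜} {n : WithTop ℕ∞} {m : ℕ}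

theorem ContDiffOn.continuousOn_iteratedDeriv_of_isOpen (hf : ContDiffOn 𝕜 n f s)
    (hs : IsOpen s) (hm : m ≤ n) : ContinuousOn (iteratedDeriv m f) s :=
  (hf.continuousOn_iteratedDerivWithin hm hs.uniqueDiffOn).congr
    (iteratedDerivWithin_of_isOpen hs).symm

theorem ContDiffOn.hasDerivAt_iteratedDeriv_of_isOpen (hf : ContDiffOn 𝕜 n f s)
    (hs : IsOpen s) (hm : m < n) {x : 𝕜} (hx : x ∈ s) :
    HasDerivAt (iteratedDeriv m f) (iteratedDeriv (m + 1) f x) x := by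
  have hdiff : DifferentiableAt 𝕜 (iteratedDerivWithin m f s) x :=
    (hf.differentiableOn_iteratedDerivWithin hm hs.uniqueDiffOn x hx).differentiableAt
      (hs.mem_nhds hx)
  have heq : iteratedDerivWithin m f s =ᶠ[𝓝 x] iteratedDeriv m f :=
    eventually_of_mem (hs.mem_nhds hx) (iteratedDerivWithin_of_isOpen hs)
  rw [iteratedDeriv_succ]
  exact (hdiff.congr_of_eventuallyEq heq.symm).hasDerivAt

end IteratedDeriv

theorem integral_comp_mul_sub_add_eq_div_of_hasDerivAt {f f' : ℝ → ℝ} {b x : ℝ} (hx : x ≠ b)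
    (hf : ∀ y ∈ uIcc b x, HasDerivAt f (f' y) y) (hf' : IntervalIntegrable f' volume b x) :
    ∫ t in (0:ℝ)..1, f' (t * (x - b) + b) = (f x - f b) / (x - b) := by
  simp_rw [mul_comm _ (x - b)]
  rw [integral_comp_mul_add _ (sub_ne_zero.2 hx), integral_eq_sub_of_hasDerivAt
    (by simpa using hf) (by simpa using hf'), smul_eq_mul, inv_mul_eq_div]
  simp

noncomputable def segmentMoment (g : ℝ → ℝ) (b : ℝ) (j : ℕ) (x : ℝ) : ℝ :=
  ∫ t in (0:ℝ)..1, t ^ j * g (t * (x - b) + b)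

section SegmentMoment

variable {s : Set ℝ} {g g' : ℝ → ℝ} {b x : ℝ}

theorem Convex.mul_sub_add_mem (hconv : Convex ℝ s) (hb : b ∈ s) {y t : ℝ} (hy : y ∈ s)
    (ht : t ∈ Icc (0:ℝ) 1) : t * (y - b) + b ∈ s := by
  simpa [smul_eq_mul, add_comm] using hconv.add_smul_sub_mem hb hy ht

theorem ContinuousOn.intervalIntegrable_pow_mul_comp_mul_sub_add (hg : ContinuousOn g s)
    (hconv : Convex ℝ s) (hb : b ∈ s) (j : ℕ) (hx : x ∈ s) :
    IntervalIntegrable (fun t => t ^ j * g (t * (x - b) + b)) volume 0 1 :=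
  ContinuousOn.intervalIntegrable_of_Icc zero_le_one <| (continuousOn_pow j).mul <|
    hg.comp (by fun_prop) fun _ ht => hconv.mul_sub_add_mem hb hx ht

theorem hasDerivAt_segmentMoment (hs : IsOpen s) (hconv : Convex ℝ s) (hb : b ∈ s)
    (hg : ∀ y ∈ s, HasDerivAt g (g' y) y) (hg' : ContinuousOn g' s) (j : ℕ) (hx : x ∈ s) :
    HasDerivAt (segmentMoment g b j) (segmentMoment g' b (j + 1) x) x := by
  have hgc : ContinuousOn g s := fun y hy => (hg y hy).continuousAt.continuousWithinAt
  obtain ⟨ε, hε, hball⟩ : ∃ ε > 0, closedBall x ε ⊆ s :=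
    nhds_basis_closedBall.mem_iff.1 (hs.mem_nhds hx)
  have hmem : ∀ t ∈ Icc (0:ℝ) 1, ∀ y ∈ closedBall x ε, t * (y - b) + b ∈ s :=
    fun t ht y hy => hconv.mul_sub_add_mem hb (hball hy) ht
  -- `g'` is bounded on the compact set swept out by the segments from `b` to points near `x`.
  obtain ⟨C, hC⟩ : ∃ C, ∀ z ∈ (fun p : ℝ × ℝ => p.1 * (p.2 - b) + b) ''
      (Icc (0:ℝ) 1 ×ˢ closedBall x ε), ‖g' z‖ ≤ C :=
    ((isCompact_Icc.prod (isCompact_closedBall x ε)).image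
      (by fun_prop)).exists_bound_of_continuousOn
      (hg'.mono (by rintro _ ⟨⟨t, y⟩, ⟨ht, hy⟩, rfl⟩; exact hmem t ht y hy))
  have hIoc : uIoc (0:ℝ) 1 = Ioc 0 1 := uIoc_of_le zero_le_one
  refine (hasDerivAt_integral_of_dominated_loc_of_deriv_le (bound := fun _ => C)
    (F' := fun y t => t ^ (j + 1) * g' (t * (y - b) + b)) (ball_mem_nhds x hε) ?_
    (hgc.intervalIntegrable_pow_mul_comp_mul_sub_add hconv hb j hx)
    (hg'.intervalIntegrable_pow_mul_comp_mul_sub_add hconv hb (j + 1) hx).def'.aestronglyMeasurable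
    ?_ intervalIntegrable_const ?_).2
  · filter_upwards [ball_mem_nhds x hε] with y hy
    exact (hgc.intervalIntegrable_pow_mul_comp_mul_sub_add hconv hb j
      (hball (ball_subset_closedBall hy))).def'.aestronglyMeasurable
  · refine .of_forall fun t ht y hy => ?_
    rw [hIoc] at ht
    have ht' := Ioc_subset_Icc_self ht
    rw [norm_mul, norm_pow, Real.norm_of_nonneg ht'.1]
    exact (mul_le_of_le_one_left (norm_nonneg _) (pow_le_one₀ ht'.1 ht'.2)).trans
      (hC _ ⟨(t, y), ⟨ht', ball_subset_closedBall hy⟩, rfl⟩)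
  · refine .of_forall fun t ht y hy => ?_
    rw [hIoc] at ht
    have haff : HasDerivAt (fun y => t * (y - b) + b) t y := by
      simpa using (((hasDerivAt_id y).sub_const b).const_mul t).add_const b
    exact (((hg _ (hmem t (Ioc_subset_Icc_self ht) y (ball_subset_closedBall hy))).comp y
      haff).const_mul (t ^ j)).congr_deriv (by ring)

theorem mul_segmentMoment_pos (hconv : Convex ℝ s) (hb : b ∈ s) (hx : x ∈ s)
    (hg : ContinuousOn g s) {σ : ℝ} (hpos : ∀ z ∈ s, 0 < σ * g z) (j : ℕ) :
    0 < σ * segmentMoment g b j x := by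
  rw [segmentMoment, ← intervalIntegral.integral_const_mul]
  refine intervalIntegral_pos_of_pos_on
    ((hg.intervalIntegrable_pow_mul_comp_mul_sub_add hconv hb j hx).const_mul σ)
    (fun t ht => ?_) zero_lt_one
  rw [mul_left_comm]
  exact mul_pos (pow_pos ht.1 j) (hpos _ (hconv.mul_sub_add_mem hb hx (Ioo_subset_Icc_self ht)))

end SegmentMoment

section Derivatives

variable {N : ℕ} {A : ℝ → ℝ} {s : Set ℝ} {b x : ℝ}

theorem ContDiffOn.integral_deriv_comp_mul_sub_add {n : WithTop ℕ∞} (hA : ContDiffOn ℝ n A s)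
    (hn : 1 ≤ n) (hs : IsOpen s) (hconv : Convex ℝ s) (hb : b ∈ s) (hx : x ∈ s) (hxb : x ≠ b) :
    ∫ t in (0:ℝ)..1, deriv A (t * (x - b) + b) = (A x - A b) / (x - b) := by
  have hbx : uIcc b x ⊆ s := hconv.ordConnected.uIcc_subset hb hx
  have hdA : ContinuousOn (deriv A) s := by
    simpa using hA.continuousOn_iteratedDeriv_of_isOpen hs (m := 1) (mod_cast hn)
  refine integral_comp_mul_sub_add_eq_div_of_hasDerivAt hxb (fun y hy => ?_)
    (hdA.mono hbx).intervalIntegrable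
  simpa using hA.hasDerivAt_iteratedDeriv_of_isOpen hs (m := 0)
    (zero_lt_one.trans_le (mod_cast hn)) (hbx hy)

theorem hasDerivAt_segmentMoment_iteratedDeriv (hA : ContDiffOn ℝ N A s) (hs : IsOpen s)
    (hconv : Convex ℝ s) (hb : b ∈ s) {j : ℕ} (hj : j + 2 ≤ N) (hx : x ∈ s) :
    HasDerivAt (segmentMoment (iteratedDeriv (j + 1) A) b j)
      (segmentMoment (iteratedDeriv (j + 2) A) b (j + 1) x) x :=
  hasDerivAt_segmentMoment hs hconv hb
    (fun _ hy => hA.hasDerivAt_iteratedDeriv_of_isOpen hs (by norm_cast) hy)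
    (hA.continuousOn_iteratedDeriv_of_isOpen hs (by norm_cast)) j hx

theorem iteratedDeriv_segmentMoment_iteratedDeriv (hA : ContDiffOn ℝ N A s) (hs : IsOpen s)
    (hconv : Convex ℝ s) (hb : b ∈ s) {j m : ℕ} (hjm : j + m < N) (hx : x ∈ s) :
    iteratedDeriv m (segmentMoment (iteratedDeriv (j + 1) A) b j) x =
      segmentMoment (iteratedDeriv (j + m + 1) A) b (j + m) x := by
  induction m generalizing j with
  | zero => simp
  | succ m ih =>
    have hderiv : deriv (segmentMoment (iteratedDeriv (j + 1) A) b j) =ᶠ[𝓝 x]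
        segmentMoment (iteratedDeriv (j + 1 + 1) A) b (j + 1) := by
      filter_upwards [hs.mem_nhds hx] with y hy
      exact (hasDerivAt_segmentMoment_iteratedDeriv hA hs hconv hb (by omega) hy).deriv
    rw [iteratedDeriv_succ', hderiv.iteratedDeriv_eq, ih (by omega)]
    simp only [add_assoc, add_comm 1 m]

end Derivatives

theorem stmt_18_general (N : ℕ) (hN : 2 ≤ N) (p q : ℝ)
    (A : ℝ → ℝ) (u v : ℝ) (hu : u < p) (hv : q < v)
    (hA : ContDiffOn ℝ (↑N) A (Set.Ioo u v))
    (hAd : ∀ k, 1 ≤ k → k ≤ N → ∀ x ∈ Set.Icc p q,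
      0 < (-1 : ℝ) ^ (k - 1) * iteratedDeriv k A x)
    (b : ℝ) (hb : b ∈ Set.Icc p q) :
    ∃ c₀ : ℝ, ∀ c : ℝ, c₀ ≤ c →
      (∀ x ∈ Set.Icc p q, x ≠ b →
        c - (∫ t in (0:ℝ)..1, deriv A (t * (x - b) + b)) = c - (A x - A b) / (x - b)) ∧
      (∀ x ∈ Set.Icc p q, 0 < c - ∫ t in (0:ℝ)..1, deriv A (t * (x - b) + b)) ∧
      (∀ k, 1 ≤ k → k ≤ N - 1 → ∀ x ∈ Set.Icc p q,
        0 < (-1 : ℝ) ^ (k - 1) *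
          iteratedDeriv k (fun y => c - ∫ t in (0:ℝ)..1, deriv A (t * (y - b) + b)) x) := by
  have hsub : Icc p q ⊆ Ioo u v := Icc_subset_Ioo hu hv
  have hG₀ : ∀ y, ∫ t in (0:ℝ)..1, deriv A (t * (y - b) + b) =
      segmentMoment (iteratedDeriv (0 + 1) A) b 0 y := by
    simp [segmentMoment]
  obtain ⟨C, hC⟩ := isCompact_Icc.exists_bound_of_continuousOn fun x hx =>
    (hasDerivAt_segmentMoment_iteratedDeriv hA isOpen_Ioo (convex_Ioo u v) (hsub hb)
      (j := 0) hN (hsub hx)).continuousAt.continuousWithinAt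
  refine ⟨C + 1, fun c hc => ⟨fun x hx hxb => ?_, fun x hx => ?_, fun k hk hkN x hx => ?_⟩⟩
  · rw [hA.integral_deriv_comp_mul_sub_add (by norm_cast; omega) isOpen_Ioo (convex_Ioo u v)
      (hsub hb) (hsub hx) hxb]
  · rw [hG₀]
    linarith [(le_abs_self _).trans (hC x hx)]
  · obtain ⟨m, rfl⟩ : ∃ m, k = m + 1 := ⟨k - 1, by omega⟩
    simp_rw [hG₀]
    rw [iteratedDeriv_const_sub (by omega), iteratedDeriv_neg,
      iteratedDeriv_segmentMoment_iteratedDeriv hA isOpen_Ioo (convex_Ioo u v) (hsub hb)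
        (by omega) (hsub hx)]
    have hsign := mul_segmentMoment_pos (convex_Icc p q) hb hx
      ((hA.continuousOn_iteratedDeriv_of_isOpen isOpen_Ioo (by norm_cast; omega)).mono hsub)
      (hAd (m + 2) (by omega) (by omega)) (m + 1)
    rw [show m + 2 - 1 = m + 1 by omega] at hsign
    rw [Nat.add_sub_cancel, zero_add]
    convert hsign using 1
    ring

/-- used in §§8–9.  Subtracting a divided difference of `A` from a
sufficiently large constant produces a function satisfying the monotonicity condition
with `N` replaced by `N−1`: there is `c₀` such that for every `c ≥ c₀` the function
`B(λ) = c − ∫_0^1 A'(t(λ−b)+b) dt` (which equals `c − (A(λ)−A(b))/(λ−b)` for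
`λ ≠ b`) is positive on `[p,q]` and satisfies `(−1)^{k−1} B^{(k)} > 0` on `[p,q]`
for `1 ≤ k ≤ N−1`. -/
theorem stmt_18 (N : ℕ) (hN : 2 ≤ N) (p q : ℝ) (hpq : p < q)
    (A : ℝ → ℝ) (u v : ℝ) (hu : u < p) (hv : q < v)
    (hA : ContDiffOn ℝ (↑N) A (Set.Ioo u v))
    (hApos : ∀ x ∈ Set.Icc p q, 0 < A x)
    (hAd : ∀ k, 1 ≤ k → k ≤ N → ∀ x ∈ Set.Icc p q,
      0 < (-1 : ℝ) ^ (k - 1) * iteratedDeriv k A x)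
    (b : ℝ) (hb : b ∈ Set.Icc p q) :
    ∃ c₀ : ℝ, ∀ c : ℝ, c₀ ≤ c →
      (∀ x ∈ Set.Icc p q, x ≠ b →
        c - (∫ t in (0:ℝ)..1, deriv A (t * (x - b) + b)) = c - (A x - A b) / (x - b)) ∧
      (∀ x ∈ Set.Icc p q, 0 < c - ∫ t in (0:ℝ)..1, deriv A (t * (x - b) + b)) ∧
      (∀ k, 1 ≤ k → k ≤ N - 1 → ∀ x ∈ Set.Icc p q,
        0 < (-1 : ℝ) ^ (k - 1) *
          iteratedDeriv k (fun y => c - ∫ t in (0:ℝ)..1, deriv A (t * (y - b) + b)) x) :=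
  stmt_18_general N hN p q A u v hu hv hA hAd b hb
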